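/- arXiv:2007.13108 — 5 statements merged into one kernel-verified Lean document; each statement's English description precedes it below -/
import Mathlib

section
/- If A is a positive semi-definite n×n matrix whose off-diagonal entries are all non-positive and whose diagonal entries are at most 1, then A ⪯ 2·diag(A) (and in particular A ⪯ 2·Id). More precisely, for any u ∈ ℝ^n, ⟨u, A u⟩ ≤ 2⟨u, diag(A) u⟩. -/
/-!
Split `u = u⁺ - u⁻`. For a positive semidefinite `A`, the parallelogram identity gives
`⟨u⁺ - u⁻, A (u⁺ - u⁻)⟩ ≤ 2⟨u⁺, A u⁺⟩ + 2⟨u⁻, A u⁻⟩`. On a nonnegative vector the off-diagonal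
entries of `A` only contribute nonpositive terms, so each of these forms is bounded by its
diagonal part, and the diagonal parts of `u⁺` and `u⁻` add up to that of `u` because `u⁺` and `u⁻`
have disjoint supports.
-/

open Finset

theorem sq_eq_posPart_sq_add_negPart_sq (x : ℝ) : x ^ 2 = x⁺ ^ 2 + x⁻ ^ 2 := by
  rcases le_total 0 x with hx | hx
  · simp [posPart_eq_self.2 hx, negPart_eq_zero.2 hx]
  · simp [posPart_eq_zero.2 hx, negPart_eq_neg.2 hx]

namespace Matrix

variable {ι R : Type*} [Fintype ι]

theorem dotProduct_mulVec_self_eq_sum [CommSemiring R] (A : Matrix ι ι R) (u : ι → R) :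
    u ⬝ᵥ A *ᵥ u = ∑ i, ∑ j, u i * A i j * u j := by
  simp only [dotProduct, mulVec, mul_sum, mul_assoc]

theorem dotProduct_mulVec_add_add_dotProduct_mulVec_sub [CommRing R] (A : Matrix ι ι R)
    (u v : ι → R) :
    (u + v) ⬝ᵥ A *ᵥ (u + v) + (u - v) ⬝ᵥ A *ᵥ (u - v) =
      2 * (u ⬝ᵥ A *ᵥ u) + 2 * (v ⬝ᵥ A *ᵥ v) := by
  simp only [mulVec_add, mulVec_sub, add_dotProduct, sub_dotProduct, dotProduct_add,
    dotProduct_sub]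
  ring

theorem PosSemidef.dotProduct_mulVec_sub_le {A : Matrix ι ι ℝ} (hA : A.PosSemidef)
    (u v : ι → ℝ) :
    (u - v) ⬝ᵥ A *ᵥ (u - v) ≤ 2 * (u ⬝ᵥ A *ᵥ u) + 2 * (v ⬝ᵥ A *ᵥ v) := by
  have h := hA.dotProduct_mulVec_nonneg (u + v)
  rw [star_trivial] at h
  linarith [dotProduct_mulVec_add_add_dotProduct_mulVec_sub A u v]

theorem dotProduct_mulVec_le_sum_diag_of_nonneg [CommRing R] [LinearOrder R]
    [IsStrictOrderedRing R] {A : Matrix ι ι R} (hoff : ∀ i j, i ≠ j → A i j ≤ 0) {v : ι → R}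
    (hv : 0 ≤ v) :
    v ⬝ᵥ A *ᵥ v ≤ ∑ i, A i i * v i ^ 2 := by
  classical
  rw [dotProduct_mulVec_self_eq_sum]
  refine sum_le_sum fun i _ => ?_
  calc ∑ j, v i * A i j * v j ≤ ∑ j, if i = j then A i i * v i ^ 2 else 0 := by
        refine sum_le_sum fun j _ => ?_
        split_ifs with hij
        · subst hij; exact le_of_eq (by ring)
        · exact mul_nonpos_of_nonpos_of_nonneg
            (mul_nonpos_of_nonneg_of_nonpos (hv i) (hoff i j hij)) (hv j)
    _ = A i i * v i ^ 2 := by rw [sum_ite_eq, if_pos (mem_univ i)]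

theorem PosSemidef.dotProduct_mulVec_le_two_mul_sum_diag
    {A : Matrix ι ι ℝ} (hA : A.PosSemidef) (hoff : ∀ i j, i ≠ j → A i j ≤ 0) (u : ι → ℝ) :
    u ⬝ᵥ A *ᵥ u ≤ 2 * ∑ i, A i i * u i ^ 2 := by
  calc u ⬝ᵥ A *ᵥ u = (u⁺ - u⁻) ⬝ᵥ A *ᵥ (u⁺ - u⁻) := by rw [posPart_sub_negPart]
    _ ≤ 2 * (u⁺ ⬝ᵥ A *ᵥ u⁺) + 2 * (u⁻ ⬝ᵥ A *ᵥ u⁻) := hA.dotProduct_mulVec_sub_le _ _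
    _ ≤ 2 * ∑ i, A i i * u⁺ i ^ 2 + 2 * ∑ i, A i i * u⁻ i ^ 2 := by
        gcongr
        · exact dotProduct_mulVec_le_sum_diag_of_nonneg hoff (posPart_nonneg u)
        · exact dotProduct_mulVec_le_sum_diag_of_nonneg hoff (negPart_nonneg u)
    _ = 2 * ∑ i, A i i * u i ^ 2 := by
        simp only [← mul_add, ← sum_add_distrib, sq_eq_posPart_sq_add_negPart_sq (u _),
          Pi.posPart_apply, Pi.negPart_apply]

end Matrix

/-- If `A` is PSD with non-positive off-diagonal entries and diagonal entries at most `1`,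
then `⟨u, A u⟩ ≤ 2⟨u, diag(A) u⟩`, and in particular `A ⪯ 2·Id`. -/
theorem stmt4 {n : ℕ} (A : Matrix (Fin n) (Fin n) ℝ) (hA : A.PosSemidef)
    (hoff : ∀ i j, i ≠ j → A i j ≤ 0) (hdiag : ∀ i, A i i ≤ 1)
    (u : Fin n → ℝ) :
    (∑ i, ∑ j, u i * A i j * u j) ≤ 2 * ∑ i, A i i * (u i) ^ 2 ∧
    (∑ i, ∑ j, u i * A i j * u j) ≤ 2 * ∑ i, (u i) ^ 2 := by
  have key := hA.dotProduct_mulVec_le_two_mul_sum_diag hoff u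
  rw [Matrix.dotProduct_mulVec_self_eq_sum] at key
  refine ⟨key, key.trans ?_⟩
  gcongr with i
  exact mul_le_of_le_one_left (sq_nonneg _) (hdiag i)
end

section
/- If a probability measure ν on {-1,1}^n satisfies the Rayleigh property, then ν is 2-semi-log-concave, i.e., ∇²L[ν](x) ⪯ 2·Id for all x ∈ ℝ^n, and moreover ∇²L[ν](x) ⪯ 2·diag(∇²L[ν](x)) for all x. -/
/-!
The Hessian of `L[ν]` at `x` is the covariance matrix `A` of the tilted measure `τ_x ν`, which
lives on `{-1,1}^n`. Hence `A` is positive semidefinite, its diagonal entries `1 - aᵢ²` are at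
most `1`, and the Rayleigh property says exactly that its off-diagonal entries are `≤ 0`. For such
a matrix, `uᵀAu + |u|ᵀA|u| ≤ 2 ∑ Aᵢᵢ uᵢ²` entrywise, and `|u|ᵀA|u| ≥ 0`, so
`A ⪯ 2 diag A ⪯ 2 Id`.
-/

open Finset

/-- The embedding of a Boolean point into `{-1,1}^n ⊆ ℝ^n`. -/
noncomputable def vec {n : ℕ} (σ : Fin n → Bool) : Fin n → ℝ := fun i => if σ i then 1 else -1

/-- The log-Laplace transform of a (weighted) measure `ν` on the discrete cube. -/
noncomputable def LL {n : ℕ} (ν : (Fin n → Bool) → ℝ) (x : Fin n → ℝ) : ℝ :=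
  Real.log (∑ σ : Fin n → Bool, ν σ * Real.exp (∑ i, x i * vec σ i))

/-- The exponential tilt `τ_w ν` of `ν`, as a weight function on the cube. -/
noncomputable def tilt {n : ℕ} (ν : (Fin n → Bool) → ℝ) (w : Fin n → ℝ) (σ : Fin n → Bool) : ℝ :=
  ν σ * Real.exp (∑ i, w i * vec σ i) /
    ∑ τ : Fin n → Bool, ν τ * Real.exp (∑ i, w i * vec τ i)

/-- Barycenter (mean) of the tilted measure, `a_ν(w)`. -/
noncomputable def tmean {n : ℕ} (ν : (Fin n → Bool) → ℝ) (w : Fin n → ℝ) (i : Fin n) : ℝ :=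
  ∑ σ : Fin n → Bool, tilt ν w σ * vec σ i

/-- Covariance matrix of the tilted measure, `A_ν(w) = Cov(τ_w ν)`. -/
noncomputable def tcov {n : ℕ} (ν : (Fin n → Bool) → ℝ) (w : Fin n → ℝ) (i j : Fin n) : ℝ :=
  ∑ σ : Fin n → Bool, tilt ν w σ * (vec σ i - tmean ν w i) * (vec σ j - tmean ν w j)

/-- Partial derivative in the `i`-th coordinate direction. -/
noncomputable def pderiv' {n : ℕ} (f : (Fin n → ℝ) → ℝ) (i : Fin n) (x : Fin n → ℝ) : ℝ :=
  fderiv ℝ f x (Pi.single i 1)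

/-- Hessian matrix entry `∂ᵢ∂ⱼ f (x)`. -/
noncomputable def hess {n : ℕ} (f : (Fin n → ℝ) → ℝ) (x : Fin n → ℝ) (i j : Fin n) : ℝ :=
  pderiv' (pderiv' f j) i x

section QuadraticForm

variable {ι : Type*} [Fintype ι]

theorem sum_mul_sub_mul_sub_of_sum_eq_one {α : Type*} [Fintype α] (q a b : α → ℝ)
    (hq : ∑ s, q s = 1) :
    ∑ s, q s * (a s - ∑ t, q t * a t) * (b s - ∑ t, q t * b t)
      = ∑ s, q s * a s * b s - (∑ s, q s * a s) * ∑ s, q s * b s := by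
  set ma := ∑ t, q t * a t
  set mb := ∑ t, q t * b t
  have h : ∀ s, q s * (a s - ma) * (b s - mb)
      = q s * a s * b s - mb * (q s * a s) - ma * (q s * b s) + ma * mb * q s := fun s => by ring
  simp only [h, sum_add_distrib, sum_sub_distrib, ← mul_sum, hq]
  ring

theorem sum_mul_covariance_mul_nonneg {α : Type*} [Fintype α] (q : α → ℝ) (hq : ∀ s, 0 ≤ q s)
    (f : α → ι → ℝ) (m u : ι → ℝ) :
    0 ≤ ∑ i, ∑ j, u i * (∑ s, q s * (f s i - m i) * (f s j - m j)) * u j := by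
  have h : ∑ i, ∑ j, u i * (∑ s, q s * (f s i - m i) * (f s j - m j)) * u j
      = ∑ s, q s * (∑ i, u i * (f s i - m i)) ^ 2 :=
    calc ∑ i, ∑ j, u i * (∑ s, q s * (f s i - m i) * (f s j - m j)) * u j
        = ∑ i, ∑ j, ∑ s, q s * (u i * (f s i - m i)) * (u j * (f s j - m j)) :=
          sum_congr rfl fun i _ => sum_congr rfl fun j _ => by
            rw [mul_sum, sum_mul]; exact sum_congr rfl fun s _ => by ring
      _ = ∑ i, ∑ s, ∑ j, q s * (u i * (f s i - m i)) * (u j * (f s j - m j)) :=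
          sum_congr rfl fun i _ => sum_comm
      _ = ∑ s, ∑ i, ∑ j, q s * (u i * (f s i - m i)) * (u j * (f s j - m j)) := sum_comm
      _ = _ := sum_congr rfl fun s _ => by
          rw [sq, sum_mul_sum, mul_sum]
          exact sum_congr rfl fun i _ => by rw [mul_sum]; exact sum_congr rfl fun j _ => by ring
  rw [h]
  exact sum_nonneg fun s _ => mul_nonneg (hq s) (sq_nonneg _)

theorem sum_mul_mul_le_two_mul_sum_diag (A : ι → ι → ℝ) (hoff : ∀ i j, i ≠ j → A i j ≤ 0)
    (hpsd : ∀ v : ι → ℝ, 0 ≤ ∑ i, ∑ j, v i * A i j * v j) (u : ι → ℝ) :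
    ∑ i, ∑ j, u i * A i j * u j ≤ 2 * ∑ i, A i i * u i ^ 2 := by
  classical
  have entrywise : ∀ i j, u i * A i j * u j + |u i| * A i j * |u j|
      ≤ if i = j then 2 * (A i i * u i ^ 2) else 0 := by
    intro i j
    split_ifs with hij
    · subst hij
      rw [mul_right_comm |u i|, abs_mul_abs_self]
      exact le_of_eq (by ring)
    · nlinarith [hoff i j hij, neg_abs_le (u i * u j), abs_mul (u i) (u j)]
  have hsum := sum_le_sum fun i (_ : i ∈ univ) => sum_le_sum fun j (_ : j ∈ univ) => entrywise i j
  simp only [sum_ite_eq, mem_univ, if_true, sum_add_distrib, ← mul_sum] at hsum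
  linarith [hpsd fun i => |u i|]

end QuadraticForm

section PartialDerivatives

variable {n : ℕ} {f g : (Fin n → ℝ) → ℝ} {x : Fin n → ℝ}

theorem pderiv'_log (hf : DifferentiableAt ℝ f x) (hfx : f x ≠ 0) (i : Fin n) :
    pderiv' (fun y => Real.log (f y)) i x = pderiv' f i x / f x := by
  rw [pderiv', fderiv.log hf hfx, pderiv', smul_apply, smul_eq_mul, inv_mul_eq_div]

theorem pderiv'_div (hf : DifferentiableAt ℝ f x) (hg : DifferentiableAt ℝ g x) (hgx : g x ≠ 0)
    (i : Fin n) :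
    pderiv' (fun y => f y / g y) i x = (pderiv' f i x * g x - f x * pderiv' g i x) / g x ^ 2 := by
  have h : HasFDerivAt (fun y => f y * (g y)⁻¹) _ x :=
    hf.hasFDerivAt.mul ((hasDerivAt_inv hgx).comp_hasFDerivAt x hg.hasFDerivAt)
  simp only [div_eq_mul_inv]
  rw [pderiv', h.fderiv]
  simp only [pderiv', add_apply, smul_apply, smul_eq_mul]
  field_simp
  ring

end PartialDerivatives

variable {n : ℕ}

theorem vec_mul_self (σ : Fin n → Bool) (i : Fin n) : vec σ i * vec σ i = 1 := by
  unfold vec; split <;> norm_num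

/-- The Laplace transform of `c` on the cube, so that `LL ν = Real.log ∘ laplace ν`. -/
noncomputable def laplace (c : (Fin n → Bool) → ℝ) (x : Fin n → ℝ) : ℝ :=
  ∑ σ : Fin n → Bool, c σ * Real.exp (∑ i, x i * vec σ i)

noncomputable def pairing (σ : Fin n → Bool) : (Fin n → ℝ) →L[ℝ] ℝ :=
  ∑ i, vec σ i • ContinuousLinearMap.proj i

theorem pairing_apply (σ : Fin n → Bool) (x : Fin n → ℝ) :
    pairing σ x = ∑ i, x i * vec σ i := by
  simp [pairing, mul_comm]

theorem hasFDerivAt_laplace (c : (Fin n → Bool) → ℝ) (x : Fin n → ℝ) :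
    HasFDerivAt (laplace c) (∑ σ, (c σ * Real.exp (pairing σ x)) • pairing σ) x := by
  have h : laplace c = fun y => ∑ σ, c σ * Real.exp (pairing σ y) := by
    funext y; simp only [laplace, pairing_apply]
  rw [h]
  refine HasFDerivAt.fun_sum fun σ _ => ?_
  simpa [smul_smul] using ((pairing σ).hasFDerivAt (x := x)).exp.const_mul (c σ)

theorem differentiable_laplace (c : (Fin n → Bool) → ℝ) : Differentiable ℝ (laplace c) :=
  fun x => (hasFDerivAt_laplace c x).differentiableAt

theorem pderiv'_laplace (c : (Fin n → Bool) → ℝ) (x : Fin n → ℝ) (i : Fin n) :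
    pderiv' (laplace c) i x = laplace (fun σ => c σ * vec σ i) x := by
  simp [pderiv', (hasFDerivAt_laplace c x).fderiv, pairing_apply,
    Pi.single_apply, laplace, mul_right_comm]

variable {ν : (Fin n → Bool) → ℝ}

theorem laplace_pos (hν0 : ∀ σ, 0 ≤ ν σ) (hν1 : 0 < ∑ σ, ν σ) (x : Fin n → ℝ) :
    0 < laplace ν x := by
  obtain ⟨σ, hσ⟩ : ∃ σ, 0 < ν σ := by
    by_contra! h
    exact hν1.not_ge (sum_nonpos fun σ _ => h σ)
  exact sum_pos' (fun τ _ => mul_nonneg (hν0 τ) (Real.exp_pos _).le)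
    ⟨σ, mem_univ _, mul_pos hσ (Real.exp_pos _)⟩

theorem tilt_nonneg (hν0 : ∀ σ, 0 ≤ ν σ) (w : Fin n → ℝ) (σ : Fin n → Bool) :
    0 ≤ tilt ν w σ :=
  div_nonneg (mul_nonneg (hν0 σ) (Real.exp_pos _).le)
    (sum_nonneg fun τ _ => mul_nonneg (hν0 τ) (Real.exp_pos _).le)

theorem sum_tilt {w : Fin n → ℝ} (hZ : laplace ν w ≠ 0) : ∑ σ, tilt ν w σ = 1 := by
  simp only [tilt, ← sum_div]
  exact div_self hZ

theorem tmean_eq_div (w : Fin n → ℝ) (i : Fin n) :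
    tmean ν w i = laplace (fun σ => ν σ * vec σ i) w / laplace ν w := by
  simp only [tmean, tilt, laplace, sum_div]
  exact sum_congr rfl fun σ _ => by ring

theorem sum_tilt_mul_mul (w : Fin n → ℝ) (i j : Fin n) :
    ∑ σ, tilt ν w σ * vec σ i * vec σ j
      = laplace (fun σ => ν σ * vec σ i * vec σ j) w / laplace ν w := by
  simp only [tilt, laplace, sum_div]
  exact sum_congr rfl fun σ _ => by ring

section Covariance

variable {w : Fin n → ℝ} (hZ : laplace ν w ≠ 0)
include hZ

theorem tcov_eq_sub (i j : Fin n) :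
    tcov ν w i j = ∑ σ, tilt ν w σ * vec σ i * vec σ j - tmean ν w i * tmean ν w j :=
  sum_mul_sub_mul_sub_of_sum_eq_one _ _ _ (sum_tilt hZ)

theorem tcov_eq_div (i j : Fin n) :
    tcov ν w i j = (laplace (fun σ => ν σ * vec σ i * vec σ j) w * laplace ν w
      - laplace (fun σ => ν σ * vec σ i) w * laplace (fun σ => ν σ * vec σ j) w)
        / laplace ν w ^ 2 := by
  rw [tcov_eq_sub hZ, sum_tilt_mul_mul, tmean_eq_div, tmean_eq_div]
  field_simp

theorem tcov_self_le_one (i : Fin n) : tcov ν w i i ≤ 1 := by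
  simp only [tcov_eq_sub hZ, mul_assoc, vec_mul_self, mul_one, sum_tilt hZ]
  exact sub_le_self _ (mul_self_nonneg _)

theorem tcov_nonpos_of_mul_le {i j : Fin n}
    (h : laplace (fun σ => ν σ * vec σ i * vec σ j) w * laplace ν w
      ≤ laplace (fun σ => ν σ * vec σ i) w * laplace (fun σ => ν σ * vec σ j) w) :
    tcov ν w i j ≤ 0 := by
  rw [tcov_eq_div hZ]
  exact div_nonpos_of_nonpos_of_nonneg (sub_nonpos.2 h) (sq_nonneg _)

end Covariance

theorem sum_mul_tcov_mul_nonneg (hν0 : ∀ σ, 0 ≤ ν σ) (w u : Fin n → ℝ) :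
    0 ≤ ∑ i, ∑ j, u i * tcov ν w i j * u j :=
  sum_mul_covariance_mul_nonneg (tilt ν w) (tilt_nonneg hν0 w) vec (tmean ν w) u

section Derivatives

variable (hZ : ∀ y, laplace ν y ≠ 0)
include hZ

theorem pderiv'_LL_eq_tmean (j : Fin n) : pderiv' (LL ν) j = fun y => tmean ν y j := by
  funext y
  rw [tmean_eq_div, ← pderiv'_laplace]
  exact pderiv'_log (differentiable_laplace ν y) (hZ y) j

theorem hess_LL_eq_tcov (x : Fin n → ℝ) (i j : Fin n) : hess (LL ν) x i j = tcov ν x i j := by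
  have hmean : (fun y => tmean ν y j)
      = fun y => laplace (fun σ => ν σ * vec σ j) y / laplace ν y :=
    funext fun y => tmean_eq_div y j
  rw [hess, pderiv'_LL_eq_tmean hZ, hmean, pderiv'_div (differentiable_laplace _ x)
    (differentiable_laplace ν x) (hZ x), pderiv'_laplace, pderiv'_laplace, tcov_eq_div (hZ x)]
  simp only [mul_right_comm _ (vec _ j) (vec _ i)]
  ring

end Derivatives

/-- If `ν` satisfies the Rayleigh property then `ν` is `2`-semi-log-concave:
`∇²L[ν](x) ⪯ 2·Id`, and moreover `∇²L[ν](x) ⪯ 2·diag(∇²L[ν](x))`, for all `x`. -/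
theorem stmt6 {n : ℕ} (ν : (Fin n → Bool) → ℝ)
    (hν0 : ∀ σ, 0 ≤ ν σ) (hν1 : ∑ σ : Fin n → Bool, ν σ = 1)
    (hRayleigh : ∀ θ : Fin n → ℝ, ∀ i j, i ≠ j →
        (∑ σ : Fin n → Bool, ν σ * (vec σ i * vec σ j * Real.exp (∑ k, θ k * vec σ k))) *
          (∑ σ : Fin n → Bool, ν σ * Real.exp (∑ k, θ k * vec σ k)) ≤
        (∑ σ : Fin n → Bool, ν σ * (vec σ i * Real.exp (∑ k, θ k * vec σ k))) *
          (∑ σ : Fin n → Bool, ν σ * (vec σ j * Real.exp (∑ k, θ k * vec σ k)))) :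
    ∀ (x : Fin n → ℝ) (u : Fin n → ℝ),
      (∑ i, ∑ j, u i * hess (LL ν) x i j * u j) ≤ 2 * ∑ i, (u i) ^ 2 ∧
      (∑ i, ∑ j, u i * hess (LL ν) x i j * u j) ≤ 2 * ∑ i, hess (LL ν) x i i * (u i) ^ 2 := by
  intro x u
  have hZ : ∀ y, laplace ν y ≠ 0 := fun y => (laplace_pos hν0 (hν1 ▸ one_pos) y).ne'
  simp only [hess_LL_eq_tcov hZ]
  have hoff : ∀ i j, i ≠ j → tcov ν x i j ≤ 0 := fun i j hij =>
    tcov_nonpos_of_mul_le (hZ x) (by simpa only [laplace, mul_assoc] using hRayleigh x i j hij)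
  have hquad := sum_mul_mul_le_two_mul_sum_diag (tcov ν x) hoff (sum_mul_tcov_mul_nonneg hν0 x) u
  refine ⟨hquad.trans ?_, hquad⟩
  gcongr with i
  exact mul_le_of_le_one_left (sq_nonneg _) (tcov_self_le_one (hZ x) i)
end

section
/- If φ : {-1,1}^n → ℝ is 1-Hamming-Lipschitz, then its multilinear (harmonic) extension φ : [-1,1]^n → ℝ satisfies |∂ᵢφ(x)| ≤ 1 for all x ∈ [-1,1]^n and all i ∈ [n]; consequently the extension is √n-Lipschitz with respect to the Euclidean distance on [-1,1]^n. -/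
/-!
The multilinear extension is affine in each coordinate, so `∂ᵢφ(x)` is half the difference of
its values at `xᵢ = 1` and `xᵢ = -1`. Flipping the `i`-th bit carries the product measure on the
cube with mean `x` and `xᵢ = -1` onto the one with `xᵢ = 1`, so this difference is the average,
under a probability measure, of `φ(σ) - φ(σ with bit i flipped)`, which is at most `2` by the
Lipschitz condition. The Euclidean bound follows from the mean value theorem along a segment of the convex cube and
Cauchy–Schwarz: `∑ |xᵢ - yᵢ| ≤ √n ‖x - y‖₂`.
-/

open Finset

/-- The multilinear (harmonic) extension of `φ : {-1,1}^n → ℝ` to `[-1,1]^n`. -/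
noncomputable def mext {n : ℕ} (φ : (Fin n → Bool) → ℝ) (x : Fin n → ℝ) : ℝ :=
  ∑ σ : Fin n → Bool, φ σ * ∏ i, (1 + x i * vec σ i) / 2

open Function

lemma sum_abs_le_sqrt_card_mul_sqrt_sum_sq {ι : Type*} (s : Finset ι) (v : ι → ℝ) :
    ∑ i ∈ s, |v i| ≤ √(#s : ℝ) * √(∑ i ∈ s, v i ^ 2) := by
  rw [← Real.sqrt_mul (Nat.cast_nonneg _)]
  refine (le_abs_self _).trans (Real.abs_le_sqrt ?_)
  simpa only [sq_abs] using sq_sum_le_card_mul_sum_sq (s := s) (f := fun i => |v i|)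

lemma convex_setOf_forall_abs_le {ι : Type*} (r : ℝ) :
    Convex ℝ {x : ι → ℝ | ∀ i, |x i| ≤ r} := by
  simpa only [Set.pi, Set.mem_univ, true_implies, Set.mem_Icc, ← abs_le] using
    convex_pi (s := Set.univ) fun i (_ : i ∈ Set.univ) => convex_Icc (-r) r

lemma hasDerivAt_update_pderiv' {n : ℕ} {f : (Fin n → ℝ) → ℝ} {x : Fin n → ℝ}
    (hf : DifferentiableAt ℝ f x) (i : Fin n) :
    HasDerivAt (fun t => f (update x i t)) (pderiv' f i x) (x i) :=
  hf.hasFDerivAt.comp_hasDerivAt_of_eq (x i) (hasDerivAt_update x i (x i)) (update_eq_self i x).symm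

lemma fderiv_apply_eq_sum_pderiv' {n : ℕ} (f : (Fin n → ℝ) → ℝ) (x v : Fin n → ℝ) :
    fderiv ℝ f x v = ∑ i, v i * pderiv' f i x := by
  conv_lhs => rw [← univ_sum_single v]
  refine (map_sum _ _ _).trans (sum_congr rfl fun i _ => ?_)
  rw [pderiv', ← smul_eq_mul, ← map_smul, ← Pi.single_smul', smul_eq_mul, mul_one]

lemma abs_sub_le_mul_sum_abs_sub_of_abs_pderiv'_le {n : ℕ} {f : (Fin n → ℝ) → ℝ}
    {s : Set (Fin n → ℝ)} (hs : Convex ℝ s) (hf : ∀ z ∈ s, DifferentiableAt ℝ f z) {L : ℝ}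
    (hL : ∀ z ∈ s, ∀ i, |pderiv' f i z| ≤ L) {x y : Fin n → ℝ} (hx : x ∈ s) (hy : y ∈ s) :
    |f x - f y| ≤ L * ∑ i, |x i - y i| := by
  have hseg : ∀ t ∈ Set.Icc (0 : ℝ) 1, y + t • (x - y) ∈ s := fun t ht =>
    hs.add_smul_sub_mem hy hx ht
  have hg : ∀ t ∈ Set.Icc (0 : ℝ) 1, HasDerivWithinAt (fun t => f (y + t • (x - y)))
      (fderiv ℝ f (y + t • (x - y)) (x - y)) (Set.Icc 0 1) t := fun t ht => by
    have hline := ((hasDerivAt_id t).smul_const (x - y)).const_add y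
    rw [one_smul] at hline
    exact ((hf _ (hseg t ht)).hasFDerivAt.comp_hasDerivAt t hline).hasDerivWithinAt
  have hbound : ∀ t ∈ Set.Ico (0 : ℝ) 1, ‖fderiv ℝ f (y + t • (x - y)) (x - y)‖ ≤
      L * ∑ i, |x i - y i| := fun t ht => by
    rw [Real.norm_eq_abs, fderiv_apply_eq_sum_pderiv', mul_sum]
    refine (abs_sum_le_sum_abs _ _).trans (sum_le_sum fun i _ => ?_)
    rw [abs_mul, mul_comm, Pi.sub_apply]
    exact mul_le_mul_of_nonneg_right (hL _ (hseg t (Set.Ico_subset_Icc_self ht)) i) (abs_nonneg _)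
  simpa using norm_image_sub_le_of_norm_deriv_le_segment_01' hg hbound

section BooleanCube

variable {n : ℕ}

lemma abs_vec (σ : Fin n → Bool) (i : Fin n) : |vec σ i| = 1 := by
  unfold vec; split_ifs <;> simp

-- For `x ∈ [-1,1]^n`, the product probability measure on the cube with mean `x`;
-- `mext φ x` is the expectation of `φ` under it.
noncomputable def cubeWeight (x : Fin n → ℝ) (σ : Fin n → Bool) : ℝ :=
  ∏ i, (1 + x i * vec σ i) / 2

lemma mext_eq_sum_mul_cubeWeight (φ : (Fin n → Bool) → ℝ) (x : Fin n → ℝ) :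
    mext φ x = ∑ σ, φ σ * cubeWeight x σ :=
  rfl

lemma cubeWeight_nonneg {x : Fin n → ℝ} (hx : ∀ i, |x i| ≤ 1) (σ : Fin n → Bool) :
    0 ≤ cubeWeight x σ := by
  refine prod_nonneg fun i _ => div_nonneg ?_ zero_le_two
  have : |x i * vec σ i| ≤ 1 := by rw [abs_mul, abs_vec, mul_one]; exact hx i
  linarith [neg_abs_le (x i * vec σ i)]

lemma sum_cubeWeight (x : Fin n → ℝ) : ∑ σ, cubeWeight x σ = 1 :=
  calc ∑ σ, cubeWeight x σ = ∏ i, ∑ b : Bool, (1 + x i * if b then 1 else -1) / 2 :=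
        (Fintype.prod_sum fun i (b : Bool) => (1 + x i * if b then 1 else -1) / 2).symm
    _ = 1 := prod_eq_one fun i _ => by
        rw [Fintype.sum_bool, if_pos rfl, if_neg Bool.false_ne_true]; ring

lemma abs_mext_le {g : (Fin n → Bool) → ℝ} {C : ℝ} (hg : ∀ σ, |g σ| ≤ C)
    {x : Fin n → ℝ} (hx : ∀ i, |x i| ≤ 1) : |mext g x| ≤ C :=
  calc |mext g x| ≤ ∑ σ, |g σ| * cubeWeight x σ := by
        rw [mext_eq_sum_mul_cubeWeight]
        refine (abs_sum_le_sum_abs _ _).trans_eq (sum_congr rfl fun σ _ => ?_)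
        rw [abs_mul, abs_of_nonneg (cubeWeight_nonneg hx σ)]
    _ ≤ ∑ σ, C * cubeWeight x σ :=
        sum_le_sum fun σ _ => mul_le_mul_of_nonneg_right (hg σ) (cubeWeight_nonneg hx σ)
    _ = C := by rw [← mul_sum, sum_cubeWeight, mul_one]

lemma cubeWeight_update (x : Fin n → ℝ) (i : Fin n) (s : ℝ) (σ : Fin n → Bool) :
    cubeWeight (update x i s) σ =
      (1 + s * vec σ i) / 2 * ∏ j ∈ univ.erase i, (1 + x j * vec σ j) / 2 := by
  rw [cubeWeight, ← mul_prod_erase univ _ (mem_univ i), update_self]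
  congr 1
  exact prod_congr rfl fun j hj => by rw [update_of_ne (ne_of_mem_erase hj)]

lemma mext_update (φ : (Fin n → Bool) → ℝ) (x : Fin n → ℝ) (i : Fin n) (s : ℝ) :
    mext φ (update x i s) =
      (1 - s) / 2 * mext φ (update x i (-1)) + (1 + s) / 2 * mext φ (update x i 1) := by
  simp only [mext_eq_sum_mul_cubeWeight, cubeWeight_update, mul_sum, ← sum_add_distrib]
  exact sum_congr rfl fun σ _ => by ring

def flipAt (i : Fin n) (σ : Fin n → Bool) : Fin n → Bool :=
  update σ i (!σ i)

lemma flipAt_involutive (i : Fin n) : Involutive (flipAt i) := by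
  intro σ
  simp [flipAt]

lemma vec_flipAt_self (i : Fin n) (σ : Fin n → Bool) : vec (flipAt i σ) i = -vec σ i := by
  unfold vec flipAt; cases σ i <;> simp

lemma vec_flipAt_of_ne {i j : Fin n} (h : j ≠ i) (σ : Fin n → Bool) :
    vec (flipAt i σ) j = vec σ j := by
  simp [vec, flipAt, update_of_ne h]

lemma sum_abs_vec_sub_flipAt (i : Fin n) (σ : Fin n → Bool) :
    ∑ j, |vec σ j - vec (flipAt i σ) j| = 2 := by
  rw [Fintype.sum_eq_single i fun j hj => by rw [vec_flipAt_of_ne hj, sub_self, abs_zero],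
    vec_flipAt_self, sub_neg_eq_add, ← two_mul, abs_mul, abs_vec]
  norm_num

lemma cubeWeight_update_neg_flipAt (x : Fin n → ℝ) (i : Fin n) (s : ℝ) (σ : Fin n → Bool) :
    cubeWeight (update x i (-s)) (flipAt i σ) = cubeWeight (update x i s) σ := by
  rw [cubeWeight_update, cubeWeight_update, vec_flipAt_self, neg_mul_neg]
  congr 1
  exact prod_congr rfl fun j hj => by rw [vec_flipAt_of_ne (ne_of_mem_erase hj)]

lemma mext_update_one_sub_mext_update_neg_one (φ : (Fin n → Bool) → ℝ) (x : Fin n → ℝ)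
    (i : Fin n) :
    mext φ (update x i 1) - mext φ (update x i (-1)) =
      mext (fun σ => φ σ - φ (flipAt i σ)) (update x i 1) := by
  have hflip : mext φ (update x i (-1)) = ∑ σ, φ (flipAt i σ) * cubeWeight (update x i 1) σ := by
    rw [mext_eq_sum_mul_cubeWeight, ← Equiv.sum_comp (flipAt_involutive i).toPerm]
    exact sum_congr rfl fun σ _ => by
      rw [Involutive.coe_toPerm, cubeWeight_update_neg_flipAt]
  simp only [hflip, mext_eq_sum_mul_cubeWeight, sub_mul, sum_sub_distrib]

lemma differentiable_mext (φ : (Fin n → Bool) → ℝ) : Differentiable ℝ (mext φ) := by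
  unfold mext; fun_prop

lemma pderiv'_mext (φ : (Fin n → Bool) → ℝ) (x : Fin n → ℝ) (i : Fin n) :
    pderiv' (mext φ) i x = (mext φ (update x i 1) - mext φ (update x i (-1))) / 2 := by
  set A := mext φ (update x i (-1))
  set B := mext φ (update x i 1)
  have hline : (fun t => mext φ (update x i t)) = fun t => (A + B) / 2 + t * ((B - A) / 2) :=
    funext fun t => by rw [mext_update]; ring
  have hderiv := hasDerivAt_update_pderiv' (differentiable_mext φ x) i
  rw [hline] at hderiv
  exact hderiv.unique ((hasDerivAt_mul_const _).const_add _)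

theorem abs_pderiv'_mext_le_one {φ : (Fin n → Bool) → ℝ}
    (hφ : ∀ σ τ, |φ σ - φ τ| ≤ ∑ i, |vec σ i - vec τ i|)
    {x : Fin n → ℝ} (hx : ∀ i, |x i| ≤ 1) (i : Fin n) : |pderiv' (mext φ) i x| ≤ 1 := by
  have hx' : ∀ j, |update x i 1 j| ≤ 1 := fun j => by
    rcases eq_or_ne j i with rfl | hj
    · simp
    · rw [update_of_ne hj]; exact hx j
  have hdiff : ∀ σ, |φ σ - φ (flipAt i σ)| ≤ 2 := fun σ =>
    (hφ σ _).trans_eq (sum_abs_vec_sub_flipAt i σ)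
  rw [pderiv'_mext, mext_update_one_sub_mext_update_neg_one, abs_div, abs_two,
    div_le_one two_pos]
  exact abs_mext_le hdiff hx'

end BooleanCube

/-- If `φ` is `1`-Hamming-Lipschitz then its multilinear extension satisfies
`|∂ᵢφ(x)| ≤ 1` on `[-1,1]^n`; consequently it is `√n`-Lipschitz in Euclidean distance. -/
theorem stmt7 {n : ℕ} (φ : (Fin n → Bool) → ℝ)
    (hφ : ∀ x y, |φ x - φ y| ≤ ∑ i, |vec x i - vec y i|) :
    (∀ x : Fin n → ℝ, (∀ i, |x i| ≤ 1) → ∀ i, |pderiv' (mext φ) i x| ≤ 1) ∧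
    (∀ x y : Fin n → ℝ, (∀ i, |x i| ≤ 1) → (∀ i, |y i| ≤ 1) →
      |mext φ x - mext φ y| ≤ Real.sqrt n * Real.sqrt (∑ i, (x i - y i) ^ 2)) := by
  have hgrad : ∀ x : Fin n → ℝ, (∀ i, |x i| ≤ 1) → ∀ i, |pderiv' (mext φ) i x| ≤ 1 :=
    fun _ hx i => abs_pderiv'_mext_le_one hφ hx i
  refine ⟨hgrad, fun x y hx hy => ?_⟩
  calc |mext φ x - mext φ y| ≤ 1 * ∑ i, |x i - y i| :=
        abs_sub_le_mul_sum_abs_sub_of_abs_pderiv'_le (convex_setOf_forall_abs_le 1)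
          (fun _ _ => (differentiable_mext φ).differentiableAt) hgrad hx hy
    _ ≤ √n * √(∑ i, (x i - y i) ^ 2) := by
        simpa using sum_abs_le_sqrt_card_mul_sqrt_sum_sq univ fun i => x i - y i
end

section
/- Pairwise negative correlation does not imply concentration: there exist {0,1}-valued random variables X₁,…,Xₙ (rows of a Hadamard matrix construction) that are pairwise independent (hence pairwise non-positively correlated) and a 1-Hamming-Lipschitz function φ on {0,1}^n with Var[φ(X₁,…,Xₙ)] ≥ c n² for a universal constant c > 0 and infinitely many n. -/
/-!
Index the coordinates by the vectors `a ∈ 𝔽₂ᵏ` and let `X_a = a ⬝ v` for a uniform `v ∈ 𝔽₂ᵏ`, so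
that `X` is a uniformly random row of the `2ᵏ × 2ᵏ` Sylvester–Hadamard matrix. Linearly
independent functionals are jointly uniform, and two distinct nonzero vectors of `𝔽₂ᵏ` are linearly
independent, so the coordinates are pairwise independent; for the same reason two distinct rows
differ in exactly `n / 2` coordinates. Let `A` be the half of the rows with `u ⬝ v = 0` for a fixed
`u ≠ 0`: the distance from `X` to `A` is `0` or `n / 2`, each with probability `1 / 2`, so its
variance is `n² / 16`.
-/

open Finset Matrix

namespace AddMonoidHom

variable {G H : Type*} [AddGroup G] [Fintype G] [AddGroup H] [Fintype H] [DecidableEq H]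

theorem card_fiber_mul_card_of_surjective (f : G →+ H) (hf : Function.Surjective f) (h : H) :
    #{g | f g = h} * Fintype.card H = Fintype.card G := by
  have hfib := card_eq_sum_card_fiberwise (s := univ) (t := univ) (f := f) fun _ _ => mem_univ _
  rwa [sum_congr rfl fun y _ => card_fiber_eq_of_mem_range f (hf y) (hf h), sum_const, card_univ,
    card_univ, smul_eq_mul, mul_comm, eq_comm] at hfib

end AddMonoidHom

theorem card_filter_const_and_mul_card {Ω : Type*} [Fintype Ω] (q : Prop) [Decidable q]
    (p : Ω → Prop) [DecidablePred p] :
    #{ω | q ∧ p ω} * Fintype.card Ω = #{_ω : Ω | q} * #{ω | p ω} := by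
  by_cases hq : q <;> simp [hq, mul_comm]

namespace Matrix

variable {K m ι : Type*} [Field K] [Fintype K] [DecidableEq K] [Fintype m] [DecidableEq m]
  [Fintype ι] [DecidableEq ι]

theorem card_mulVec_eq_mul_of_linearIndependent (A : Matrix m ι K)
    (hA : LinearIndependent K A.row) (s : m → K) :
    #{v | A *ᵥ v = s} * Fintype.card K ^ Fintype.card m = Fintype.card K ^ Fintype.card ι := by
  have hsurj : Function.Surjective A.mulVecLin := by
    rw [← LinearMap.range_eq_top]
    apply Submodule.eq_top_of_finrank_eq
    rw [← Matrix.rank, hA.rank_matrix, Module.finrank_fintype_fun_eq_card]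
  have hfib := A.mulVecLin.toAddMonoidHom.card_fiber_mul_card_of_surjective hsurj s
  rwa [Fintype.card_fun, Fintype.card_fun] at hfib

theorem card_dotProduct_eq_mul {a : ι → K} (ha : a ≠ 0) (s : K) :
    #{v : ι → K | a ⬝ᵥ v = s} * Fintype.card K = Fintype.card K ^ Fintype.card ι := by
  have hA : LinearIndependent K (Matrix.of ![a]).row :=
    linearIndependent_unique_iff.2 (by simpa using ha)
  simpa [mulVec, funext_iff] using card_mulVec_eq_mul_of_linearIndependent _ hA ![s]

theorem card_dotProduct_pair_eq_mul {a b : ι → K} (hab : LinearIndependent K ![a, b]) (s t : K) :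
    #{v : ι → K | a ⬝ᵥ v = s ∧ b ⬝ᵥ v = t} * Fintype.card K ^ 2 =
      Fintype.card K ^ Fintype.card ι := by
  simpa [mulVec, funext_iff, Fin.forall_fin_two] using
    card_mulVec_eq_mul_of_linearIndependent (Matrix.of ![a, b]) hab ![s, t]

end Matrix

theorem linearIndependent_pair_zmod_two {M : Type*} [AddCommGroup M] [Module (ZMod 2) M] {a b : M}
    (ha : a ≠ 0) (hb : b ≠ 0) (hab : a ≠ b) :
    LinearIndependent (ZMod 2) ![a, b] := by
  rw [LinearIndependent.pair_iff' ha]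
  intro c
  obtain rfl | rfl : c = 0 ∨ c = 1 := by decide +revert
  · simpa using hb.symm
  · simpa using hab

section UniformLaw

variable {Ω α : Type*} [Fintype Ω] [DecidableEq α]

noncomputable def uniformLaw (X : Ω → α) (σ : α) : ℝ := #{ω | X ω = σ} / Fintype.card Ω

theorem uniformLaw_nonneg (X : Ω → α) (σ : α) : 0 ≤ uniformLaw X σ := by
  unfold uniformLaw; positivity

variable [Fintype α]

theorem sum_uniformLaw_mul (X : Ω → α) (f : α → ℝ) :
    ∑ σ, uniformLaw X σ * f σ = (∑ ω, f (X ω)) / Fintype.card Ω := by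
  rw [← sum_fiberwise univ X, sum_div]
  refine sum_congr rfl fun σ _ => ?_
  rw [sum_congr rfl fun ω hω => by rw [(mem_filter.1 hω).2], sum_const, nsmul_eq_mul,
    uniformLaw, div_mul_eq_mul_div]

theorem sum_ite_uniformLaw (X : Ω → α) (P : α → Prop) [DecidablePred P] :
    ∑ σ, (if P σ then uniformLaw X σ else 0) = #{ω | P (X ω)} / Fintype.card Ω := by
  simpa [mul_ite, sum_boole] using sum_uniformLaw_mul X fun σ => if P σ then 1 else 0

theorem sum_uniformLaw [Nonempty Ω] (X : Ω → α) : ∑ σ, uniformLaw X σ = 1 := by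
  simpa [Fintype.card_ne_zero] using sum_ite_uniformLaw X fun _ => True

theorem sum_ite_and_uniformLaw [Nonempty Ω] (X : Ω → α) (P Q : α → Prop) [DecidablePred P]
    [DecidablePred Q]
    (h : #{ω | P (X ω) ∧ Q (X ω)} * Fintype.card Ω = #{ω | P (X ω)} * #{ω | Q (X ω)}) :
    ∑ σ, (if P σ ∧ Q σ then uniformLaw X σ else 0) =
      (∑ σ, if P σ then uniformLaw X σ else 0) * ∑ σ, if Q σ then uniformLaw X σ else 0 := by
  have h' : (#{ω | P (X ω) ∧ Q (X ω)} : ℝ) * Fintype.card Ω =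
      #{ω | P (X ω)} * #{ω | Q (X ω)} := by
    exact_mod_cast h
  simp only [sum_ite_uniformLaw]
  rw [div_mul_div_comm, ← h']
  field_simp

end UniformLaw

open Hamming Metric

theorem abs_infDist_sub_le_hammingDist {ι : Type*} [Fintype ι] {β : ι → Type*}
    [∀ i, DecidableEq (β i)] (s : Set (Hamming β)) (x y : ∀ i, β i) :
    |infDist (toHamming x) s - infDist (toHamming y) s| ≤ hammingDist x y := by
  have hdist : dist (toHamming x) (toHamming y) = hammingDist x y := rfl
  rw [abs_sub_le_iff, ← hdist]
  constructor
  · linarith [infDist_le_infDist_add_dist (s := s) (x := toHamming x) (y := toHamming y)]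
  · linarith [infDist_le_infDist_add_dist (s := s) (x := toHamming y) (y := toHamming x),
      dist_comm (toHamming x) (toHamming y)]

def zmodTwoEquivBool : ZMod 2 ≃ Bool := finTwoEquiv

namespace Hadamard

variable {ι κ : Type*} [Fintype κ] (β : ι ≃ (κ → ZMod 2))

-- Row `v` of the Sylvester–Hadamard matrix, with its columns `a ∈ 𝔽₂ᵏ` listed along `β`.
def codeword (v : κ → ZMod 2) : ι → Bool := fun i => zmodTwoEquivBool (β i ⬝ᵥ v)

theorem codeword_eq_iff (v : κ → ZMod 2) (i : ι) (x : Bool) :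
    codeword β v i = x ↔ β i ⬝ᵥ v = zmodTwoEquivBool.symm x :=
  (Equiv.eq_symm_apply _).symm

variable [DecidableEq κ]

theorem card_dotProduct_ne_zero {u : κ → ZMod 2} (hu : u ≠ 0) :
    #{v | u ⬝ᵥ v ≠ 0} * 2 = 2 ^ Fintype.card κ := by
  have hne : ∀ x : ZMod 2, x ≠ 0 ↔ x = 1 := by decide
  simpa only [hne, ZMod.card] using card_dotProduct_eq_mul hu 1

theorem card_codeword_and_mul {i j : ι} (hij : i ≠ j) (x y : Bool) :
    #{v | codeword β v i = x ∧ codeword β v j = y} * Fintype.card (κ → ZMod 2) =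
      #{v | codeword β v i = x} * #{v | codeword β v j = y} := by
  simp only [codeword_eq_iff]
  by_cases hi : β i = 0
  · simp only [hi, zero_dotProduct]
    exact card_filter_const_and_mul_card _ _
  by_cases hj : β j = 0
  · simp only [hj, zero_dotProduct, and_comm (a := β i ⬝ᵥ _ = _), mul_comm #{v | β i ⬝ᵥ v = _}]
    exact card_filter_const_and_mul_card _ _
  have hpair := card_dotProduct_pair_eq_mul
    (linearIndependent_pair_zmod_two hi hj (β.injective.ne hij)) (zmodTwoEquivBool.symm x)
    (zmodTwoEquivBool.symm y)
  have hx := card_dotProduct_eq_mul hi (zmodTwoEquivBool.symm x)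
  have hy := card_dotProduct_eq_mul hj (zmodTwoEquivBool.symm y)
  rw [Fintype.card_fun, ZMod.card] at *
  nlinarith

variable [Fintype ι]

theorem hammingDist_codeword {v w : κ → ZMod 2} (hvw : v ≠ w) :
    hammingDist (codeword β v) (codeword β w) * 2 = 2 ^ Fintype.card κ := by
  rw [← card_dotProduct_ne_zero (sub_ne_zero.2 hvw)]
  congr 1
  refine card_equiv β fun i => ?_
  simp only [mem_filter, mem_univ, true_and, codeword, ne_eq, zmodTwoEquivBool.injective.eq_iff,
    sub_dotProduct, sub_eq_zero, dotProduct_comm v, dotProduct_comm w]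

-- Plays the role of `A`, the first `n / 2` rows.
def kerCode (u : κ → ZMod 2) : Set (Hamming fun _ : ι => Bool) :=
  (toHamming ∘ codeword β) '' {v | u ⬝ᵥ v = 0}

theorem infDist_codeword_kerCode (u v : κ → ZMod 2) :
    infDist (toHamming (codeword β v)) (kerCode β u) =
      if u ⬝ᵥ v = 0 then 0 else 2 ^ Fintype.card κ / 2 := by
  split_ifs with hv
  · exact infDist_zero_of_mem ⟨v, hv, rfl⟩
  have hdist : ∀ w, u ⬝ᵥ w = 0 →
      dist (toHamming (codeword β v)) (toHamming (codeword β w)) = 2 ^ Fintype.card κ / 2 := by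
    intro w hw
    have hvw : v ≠ w := by rintro rfl; exact hv hw
    rw [dist_eq_hammingDist, eq_div_iff two_ne_zero]
    exact_mod_cast hammingDist_codeword β hvw
  have h0 : toHamming (codeword β 0) ∈ kerCode β u := ⟨0, dotProduct_zero u, rfl⟩
  apply le_antisymm
  · exact (infDist_le_dist_of_mem h0).trans_eq (hdist 0 (dotProduct_zero u))
  · rw [le_infDist ⟨_, h0⟩]
    rintro _ ⟨w, hw, rfl⟩
    exact (hdist w hw).ge

theorem variance_infDist_kerCode [DecidableEq ι] {u : κ → ZMod 2} (hu : u ≠ 0) :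
    (∑ σ, uniformLaw (codeword β) σ * infDist (toHamming σ) (kerCode β u) ^ 2) -
        (∑ σ, uniformLaw (codeword β) σ * infDist (toHamming σ) (kerCode β u)) ^ 2 =
      (2 ^ Fintype.card κ) ^ 2 / 16 := by
  have hcard : (#{v | ¬ u ⬝ᵥ v = 0} : ℝ) = 2 ^ Fintype.card κ / 2 := by
    rw [eq_div_iff two_ne_zero]
    exact_mod_cast card_dotProduct_ne_zero hu
  simp only [sum_uniformLaw_mul, infDist_codeword_kerCode β u, ite_pow, sum_ite,
    sum_const_zero, sum_const, nsmul_eq_mul, hcard, Fintype.card_fun, ZMod.card]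
  push_cast
  field_simp
  ring

end Hadamard

open Hadamard

/-- Pairwise negative correlation (indeed pairwise independence) does not imply
concentration: for infinitely many `n` there exist pairwise independent `{0,1}`-valued
random variables `X₁,…,Xₙ` and a `1`-Hamming-Lipschitz function `φ` with
`Var[φ(X)] ≥ c n²` for a universal constant `c > 0`. -/
theorem stmt16 :
    ∃ c : ℝ, 0 < c ∧ ∀ N : ℕ, ∃ n : ℕ, N ≤ n ∧
      ∃ ν : (Fin n → Bool) → ℝ,
        (∀ σ, 0 ≤ ν σ) ∧ (∑ σ : Fin n → Bool, ν σ = 1) ∧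
        -- pairwise independence of the coordinates (hence pairwise non-positive correlation)
        (∀ i j, i ≠ j → ∀ a b : Bool,
          (∑ σ : Fin n → Bool, if σ i = a ∧ σ j = b then ν σ else 0) =
            (∑ σ : Fin n → Bool, if σ i = a then ν σ else 0) *
              (∑ σ : Fin n → Bool, if σ j = b then ν σ else 0)) ∧
        ∃ φ : (Fin n → Bool) → ℝ,
          -- φ is 1-Hamming-Lipschitz
          (∀ x y : Fin n → Bool,
            |φ x - φ y| ≤ (Finset.univ.filter fun i => x i ≠ y i).card) ∧
          -- but the variance of φ is of order n²
          c * (n : ℝ) ^ 2 ≤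
            (∑ σ : Fin n → Bool, ν σ * (φ σ) ^ 2) - (∑ σ : Fin n → Bool, ν σ * φ σ) ^ 2 := by
  refine ⟨1 / 16, by norm_num, fun N => ⟨2 ^ (N + 1), ?_, ?_⟩⟩
  · have := Nat.lt_two_pow_self (n := N + 1)
    omega
  let β : Fin (2 ^ (N + 1)) ≃ (Fin (N + 1) → ZMod 2) := (Fintype.equivFinOfCardEq (by simp)).symm
  let u : Fin (N + 1) → ZMod 2 := 1
  refine ⟨uniformLaw (codeword β), uniformLaw_nonneg _, sum_uniformLaw _,
    fun i j hij a b => sum_ite_and_uniformLaw _ _ _ (card_codeword_and_mul β hij a b),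
    fun x => infDist (toHamming x) (kerCode β u), abs_infDist_sub_le_hammingDist _, ?_⟩
  rw [variance_infDist_kerCode β one_ne_zero, Fintype.card_fin]
  push_cast
  linarith
end

section
/- Log-concavity of the generating polynomial condition: a probability measure ν on subsets of [n] (identified with {-1,1}^n via Xᵢ = 2·1_{i∈A} − 1) has log-concave generating polynomial p_ν(z) = E[Π_{i∈A} zᵢ] on the positive orthant if and only if ∇²L[ν](x) ⪯ 2(diag(∇L[ν](x)) + Id) for all x ∈ ℝ^n. In particular, since ∇L[ν](x) ∈ [-1,1]^n, this condition implies that ν is 4-semi-log-concave. -/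
open Finset

/-- The generating polynomial `p_ν(z) = E[∏_{i ∈ A} zᵢ]`, where `i ∈ A ↔ Xᵢ = 1`. -/
noncomputable def genPoly {n : ℕ} (ν : (Fin n → Bool) → ℝ) (z : Fin n → ℝ) : ℝ :=
  ∑ σ : Fin n → Bool, ν σ * ∏ i, (if σ i then z i else 1)

/-!
Under the coordinatewise substitution `z = e^{2x}` the generating polynomial becomes
`p_ν(e^{2x}) = e^{∑ xₖ} · E_ν[e^{⟨x,X⟩}]`, i.e. `log p_ν (e^{2x}) = ∑ xₖ + L[ν](x)`. The chain rule
for this diagonal change of variables gives, with `D = diag(z)`,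
`∇²L[ν](x) = 4 D ∇²(log p_ν)(z) D + 2 (diag ∇L[ν](x) + Id)`,
and `x ↦ e^{2x}` maps `ℝⁿ` onto the positive orthant, so `∇²(log p_ν) ⪯ 0` there is exactly the
stated bound. Since `∇L[ν](x)` is the mean of the tilted measure, its coordinates are at most `1`,
which turns the bound into `∇²L[ν] ⪯ 4 Id`.
-/

namespace GenPolyLogConcave

variable {n : ℕ}

def posOrthant (n : ℕ) : Set (Fin n → ℝ) := Set.univ.pi fun _ => Set.Ioi 0

lemma isOpen_posOrthant : IsOpen (posOrthant n) :=
  isOpen_set_pi Set.finite_univ fun _ _ => isOpen_Ioi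

noncomputable def expCoords (x : Fin n → ℝ) : Fin n → ℝ := fun k => Real.exp (2 * x k)

lemma expCoords_mem_posOrthant (x : Fin n → ℝ) : expCoords x ∈ posOrthant n :=
  Set.mem_univ_pi.2 fun _ => Real.exp_pos _

lemma expCoords_half_log {z : Fin n → ℝ} (hz : z ∈ posOrthant n) :
    expCoords (fun k => Real.log (z k) / 2) = z := by
  funext k
  rw [expCoords, mul_div_cancel₀ _ two_ne_zero, Real.exp_log (Set.mem_univ_pi.1 hz k)]

lemma hasFDerivAt_expCoords (x : Fin n → ℝ) :
    HasFDerivAt expCoords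
      (ContinuousLinearMap.pi fun k =>
        (2 * Real.exp (2 * x k)) • (ContinuousLinearMap.proj k : (Fin n → ℝ) →L[ℝ] ℝ)) x := by
  refine hasFDerivAt_pi.2 fun k => ?_
  refine (((hasFDerivAt_apply k x).const_mul 2).exp).congr_fderiv ?_
  ext v
  simp
  ring

lemma differentiableOn_pderiv' {ψ : (Fin n → ℝ) → ℝ} {s : Set (Fin n → ℝ)} (hs : IsOpen s)
    (hψ : ContDiffOn ℝ 2 ψ s) (j : Fin n) : DifferentiableOn ℝ (pderiv' ψ j) s :=
  (((contDiffOn_succ_iff_fderiv_of_isOpen (n := 1) hs).1 hψ).2.2.differentiableOn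
    one_ne_zero).clm_apply (differentiableOn_const _)

lemma pderiv'_mul {f g : (Fin n → ℝ) → ℝ} {x : Fin n → ℝ} (hf : DifferentiableAt ℝ f x)
    (hg : DifferentiableAt ℝ g x) (i : Fin n) :
    pderiv' (fun y => f y * g y) i x = f x * pderiv' g i x + g x * pderiv' f i x := by
  simp [pderiv', fderiv_fun_mul hf hg]

lemma pderiv'_comp_expCoords {ψ : (Fin n → ℝ) → ℝ} {x : Fin n → ℝ}
    (hψ : DifferentiableAt ℝ ψ (expCoords x)) (i : Fin n) :
    pderiv' (fun y => ψ (expCoords y)) i x =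
      2 * Real.exp (2 * x i) * pderiv' ψ i (expCoords x) := by
  rw [pderiv', fderiv_fun_comp x hψ (hasFDerivAt_expCoords x).differentiableAt,
    (hasFDerivAt_expCoords x).fderiv]
  have : (fun k => 2 * Real.exp (2 * x k) * (Pi.single i 1 : Fin n → ℝ) k)
      = (2 * Real.exp (2 * x i)) • Pi.single i 1 := by
    funext k
    by_cases h : k = i <;> simp [h]
  simp [this, pderiv']

lemma pderiv'_two_mul_exp_two_mul (x : Fin n → ℝ) (i j : Fin n) :
    pderiv' (fun y => 2 * Real.exp (2 * y j)) i x =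
      if i = j then 4 * Real.exp (2 * x j) else 0 := by
  rw [pderiv', ((((hasFDerivAt_apply j x).const_mul 2).exp).const_mul 2).fderiv]
  by_cases h : i = j
  · subst h; simp; ring
  · simp [h, Ne.symm h]

lemma differentiableAt_expCoords {f : (Fin n → ℝ) → ℝ}
    (hf : DifferentiableOn ℝ f (posOrthant n)) (x : Fin n → ℝ) :
    DifferentiableAt ℝ f (expCoords x) :=
  hf.differentiableAt (isOpen_posOrthant.mem_nhds (expCoords_mem_posOrthant x))

lemma differentiableAt_comp_expCoords {f : (Fin n → ℝ) → ℝ}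
    (hf : DifferentiableOn ℝ f (posOrthant n)) (x : Fin n → ℝ) :
    DifferentiableAt ℝ (fun y => f (expCoords y)) x :=
  (differentiableAt_expCoords hf x).comp x (hasFDerivAt_expCoords x).differentiableAt

lemma hess_comp_expCoords {ψ : (Fin n → ℝ) → ℝ} (hψ : ContDiffOn ℝ 2 ψ (posOrthant n))
    (x : Fin n → ℝ) (i j : Fin n) :
    hess (fun y => ψ (expCoords y)) x i j =
      2 * Real.exp (2 * x i) * (2 * Real.exp (2 * x j)) * hess ψ (expCoords x) i j
        + if i = j then 2 * pderiv' (fun y => ψ (expCoords y)) j x else 0 := by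
  have hψ' := differentiableAt_expCoords (hψ.differentiableOn two_ne_zero)
  have hψj := differentiableOn_pderiv' isOpen_posOrthant hψ j
  have hfun : pderiv' (fun y => ψ (expCoords y)) j
      = fun y => 2 * Real.exp (2 * y j) * pderiv' ψ j (expCoords y) :=
    funext fun y => pderiv'_comp_expCoords (hψ' y) j
  rw [hess, hfun, pderiv'_mul (by fun_prop) (differentiableAt_comp_expCoords hψj x),
    pderiv'_comp_expCoords (differentiableAt_expCoords hψj x), pderiv'_two_mul_exp_two_mul]
  by_cases h : i = j
  · subst h; simp [hess]; ring
  · simp [h, hess]; ring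

lemma quadForm_hess_comp_expCoords {ψ : (Fin n → ℝ) → ℝ} (hψ : ContDiffOn ℝ 2 ψ (posOrthant n))
    (x u : Fin n → ℝ) :
    ∑ i, ∑ j, u i * hess (fun y => ψ (expCoords y)) x i j * u j =
      4 * ∑ i, ∑ j, (expCoords x i * u i) * hess ψ (expCoords x) i j * (expCoords x j * u j)
        + 2 * ∑ i, pderiv' (fun y => ψ (expCoords y)) i x * u i ^ 2 := by
  simp only [hess_comp_expCoords hψ, mul_add, add_mul, Finset.sum_add_distrib, mul_ite, ite_mul,
    mul_zero, zero_mul, Finset.sum_ite_eq, Finset.mem_univ, if_true, Finset.mul_sum]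
  congr 1
  · refine Finset.sum_congr rfl fun i _ => Finset.sum_congr rfl fun j _ => ?_
    simp only [expCoords]
    ring
  · refine Finset.sum_congr rfl fun i _ => ?_
    ring

section

variable {α : Type*} [Fintype α] {ν : α → ℝ}

lemma sum_mul_pos_of_sum_eq_one (hν0 : ∀ σ, 0 ≤ ν σ) (hν1 : ∑ σ, ν σ = 1) {f : α → ℝ}
    (hf : ∀ σ, 0 < f σ) :
    0 < ∑ σ, ν σ * f σ := by
  obtain ⟨σ, hσ⟩ : ∃ σ, 0 < ν σ := by
    by_contra! h
    linarith [Finset.sum_nonpos fun σ (_ : σ ∈ Finset.univ) => h σ]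
  exact Finset.sum_pos' (fun τ _ => mul_nonneg (hν0 τ) (hf τ).le)
    ⟨σ, Finset.mem_univ _, mul_pos hσ (hf σ)⟩

end

noncomputable def laplace (ν : (Fin n → Bool) → ℝ) (x : Fin n → ℝ) : ℝ :=
  ∑ σ, ν σ * Real.exp (∑ i, x i * vec σ i)

variable {ν : (Fin n → Bool) → ℝ}

lemma laplace_pos (hν0 : ∀ σ, 0 ≤ ν σ) (hν1 : ∑ σ, ν σ = 1) (x : Fin n → ℝ) :
    0 < laplace ν x :=
  sum_mul_pos_of_sum_eq_one hν0 hν1 fun _ => Real.exp_pos _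

lemma genPoly_expCoords (x : Fin n → ℝ) :
    genPoly ν (expCoords x) = Real.exp (∑ k, x k) * laplace ν x := by
  rw [genPoly, laplace, Finset.mul_sum]
  refine Finset.sum_congr rfl fun σ _ => ?_
  rw [mul_left_comm, ← Real.exp_add, ← Finset.sum_add_distrib, Real.exp_sum]
  congr 1
  refine Finset.prod_congr rfl fun k _ => ?_
  cases h : σ k <;> simp [expCoords, vec, h]
  ring_nf

lemma log_genPoly_expCoords (hν0 : ∀ σ, 0 ≤ ν σ) (hν1 : ∑ σ, ν σ = 1) (x : Fin n → ℝ) :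
    Real.log (genPoly ν (expCoords x)) = ∑ k, x k + LL ν x := by
  rw [genPoly_expCoords, Real.log_mul (Real.exp_ne_zero _) (laplace_pos hν0 hν1 x).ne',
    Real.log_exp]
  rfl

lemma genPoly_pos (hν0 : ∀ σ, 0 ≤ ν σ) (hν1 : ∑ σ, ν σ = 1) {z : Fin n → ℝ}
    (hz : z ∈ posOrthant n) : 0 < genPoly ν z := by
  rw [← expCoords_half_log hz, genPoly_expCoords]
  exact mul_pos (Real.exp_pos _) (laplace_pos hν0 hν1 _)

lemma contDiff_genPoly : ContDiff ℝ 2 (genPoly ν) := by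
  refine ContDiff.sum fun σ _ => contDiff_const.mul (contDiff_prod fun i _ => ?_)
  cases σ i
  · exact contDiff_const
  · exact contDiff_apply ℝ ℝ i

lemma contDiffOn_log_genPoly (hν0 : ∀ σ, 0 ≤ ν σ) (hν1 : ∑ σ, ν σ = 1) :
    ContDiffOn ℝ 2 (fun z => Real.log (genPoly ν z)) (posOrthant n) :=
  contDiff_genPoly.contDiffOn.log fun _ hz => (genPoly_pos hν0 hν1 hz).ne'

lemma LL_eq_log_genPoly_expCoords_sub (hν0 : ∀ σ, 0 ≤ ν σ) (hν1 : ∑ σ, ν σ = 1) :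
    LL ν = fun y => Real.log (genPoly ν (expCoords y)) - ∑ k, y k := by
  funext y
  rw [log_genPoly_expCoords hν0 hν1]
  ring

lemma pderiv'_LL_add_one (hν0 : ∀ σ, 0 ≤ ν σ) (hν1 : ∑ σ, ν σ = 1) (x : Fin n → ℝ) (i : Fin n) :
    pderiv' (LL ν) i x + 1 = pderiv' (fun y => Real.log (genPoly ν (expCoords y))) i x := by
  have hφ := differentiableAt_comp_expCoords
    ((contDiffOn_log_genPoly hν0 hν1).differentiableOn two_ne_zero) x
  have hsum : HasFDerivAt (fun y : Fin n → ℝ => ∑ k, y k)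
      (∑ k, ContinuousLinearMap.proj (R := ℝ) (φ := fun _ : Fin n => ℝ) k) x :=
    HasFDerivAt.fun_sum fun k _ => hasFDerivAt_apply k x
  rw [LL_eq_log_genPoly_expCoords_sub hν0 hν1, pderiv', fderiv_fun_sub hφ hsum.differentiableAt,
    hsum.fderiv]
  simp [pderiv']

lemma hess_LL (hν0 : ∀ σ, 0 ≤ ν σ) (hν1 : ∑ σ, ν σ = 1) (x : Fin n → ℝ) (i j : Fin n) :
    hess (LL ν) x i j = hess (fun y => Real.log (genPoly ν (expCoords y))) x i j := by
  have : pderiv' (LL ν) j =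
      fun y => pderiv' (fun y => Real.log (genPoly ν (expCoords y))) j y - 1 :=
    funext fun y => by linarith [pderiv'_LL_add_one hν0 hν1 y j]
  rw [hess, hess, this, pderiv', fderiv_sub_const]
  rfl

lemma quadForm_hess_LL (hν0 : ∀ σ, 0 ≤ ν σ) (hν1 : ∑ σ, ν σ = 1) (x u : Fin n → ℝ) :
    ∑ i, ∑ j, u i * hess (LL ν) x i j * u j =
      4 * ∑ i, ∑ j, (expCoords x i * u i) *
          hess (fun z => Real.log (genPoly ν z)) (expCoords x) i j * (expCoords x j * u j)
        + 2 * (∑ i, pderiv' (LL ν) i x * u i ^ 2 + ∑ i, u i ^ 2) := by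
  simp_rw [hess_LL hν0 hν1]
  rw [quadForm_hess_comp_expCoords (contDiffOn_log_genPoly hν0 hν1)]
  simp_rw [← pderiv'_LL_add_one hν0 hν1, add_mul, one_mul, Finset.sum_add_distrib]

lemma LL_eq_log_laplace : LL ν = fun x => Real.log (laplace ν x) := rfl

lemma tilt_eq (x : Fin n → ℝ) (σ : Fin n → Bool) :
    tilt ν x σ = ν σ * Real.exp (∑ i, x i * vec σ i) / laplace ν x := rfl

lemma pderiv'_LL (hν0 : ∀ σ, 0 ≤ ν σ) (hν1 : ∑ σ, ν σ = 1) (x : Fin n → ℝ) (i : Fin n) :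
    pderiv' (LL ν) i x = tmean ν x i := by
  have hlin (σ : Fin n → Bool) : HasFDerivAt (fun y : Fin n → ℝ => ∑ k, y k * vec σ k)
      (∑ k, vec σ k • ContinuousLinearMap.proj (R := ℝ) (φ := fun _ : Fin n => ℝ) k) x :=
    HasFDerivAt.fun_sum fun k _ => (hasFDerivAt_apply k x).mul_const (vec σ k)
  have hZ : HasFDerivAt (laplace ν) _ x :=
    HasFDerivAt.fun_sum fun σ _ => ((hlin σ).exp).const_mul (ν σ)
  rw [pderiv', LL_eq_log_laplace, (hZ.log (laplace_pos hν0 hν1 x).ne').fderiv]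
  simp [tmean, tilt_eq, Pi.single_apply, div_eq_inv_mul, Finset.mul_sum, mul_assoc]

lemma tmean_le_one (hν0 : ∀ σ, 0 ≤ ν σ) (hν1 : ∑ σ, ν σ = 1) (x : Fin n → ℝ) (i : Fin n) :
    tmean ν x i ≤ 1 := by
  have hZ := laplace_pos hν0 hν1 x
  calc tmean ν x i ≤ ∑ σ, tilt ν x σ := Finset.sum_le_sum fun σ _ => by
        refine mul_le_of_le_one_right ?_ ?_
        · exact div_nonneg (mul_nonneg (hν0 σ) (Real.exp_pos _).le) hZ.le
        · unfold vec; split_ifs <;> norm_num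
    _ = 1 := by simp_rw [tilt_eq, ← Finset.sum_div]; exact div_self hZ.ne'

end GenPolyLogConcave

open GenPolyLogConcave in
/-- Log-concavity of the generating polynomial on the positive orthant is equivalent to
`∇²L[ν](x) ⪯ 2(diag(∇L[ν](x)) + Id)` for all `x ∈ ℝ^n`; in particular this condition
implies that `ν` is `4`-semi-log-concave. -/
theorem stmt18 {n : ℕ} (ν : (Fin n → Bool) → ℝ)
    (hν0 : ∀ σ, 0 ≤ ν σ) (hν1 : ∑ σ : Fin n → Bool, ν σ = 1) :
    ((∀ z : Fin n → ℝ, (∀ i, 0 < z i) → ∀ u : Fin n → ℝ,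
        (∑ i, ∑ j, u i * hess (fun y => Real.log (genPoly ν y)) z i j * u j) ≤ 0)
      ↔ (∀ x : Fin n → ℝ, ∀ u : Fin n → ℝ,
        (∑ i, ∑ j, u i * hess (LL ν) x i j * u j) ≤
          2 * ((∑ i, pderiv' (LL ν) i x * (u i) ^ 2) + ∑ i, (u i) ^ 2))) ∧
    ((∀ x : Fin n → ℝ, ∀ u : Fin n → ℝ,
        (∑ i, ∑ j, u i * hess (LL ν) x i j * u j) ≤
          2 * ((∑ i, pderiv' (LL ν) i x * (u i) ^ 2) + ∑ i, (u i) ^ 2)) →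
      ∀ x : Fin n → ℝ, ∀ u : Fin n → ℝ,
        (∑ i, ∑ j, u i * hess (LL ν) x i j * u j) ≤ 4 * ∑ i, (u i) ^ 2) := by
  have key := quadForm_hess_LL hν0 hν1
  refine ⟨⟨fun hp x u => ?_, fun hL z hz u => ?_⟩, fun hL x u => ?_⟩
  · have := hp (expCoords x) (Set.mem_univ_pi.1 (expCoords_mem_posOrthant x))
      fun i => expCoords x i * u i
    linarith [key x u]
  · set x : Fin n → ℝ := fun k => Real.log (z k) / 2
    have hx : expCoords x = z := expCoords_half_log (Set.mem_univ_pi.2 hz)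
    have := key x fun i => u i / z i
    simp only [hx, mul_div_cancel₀ _ (hz _).ne'] at this
    linarith [hL x fun i => u i / z i]
  · have hgrad : ∑ i, pderiv' (LL ν) i x * u i ^ 2 ≤ ∑ i, u i ^ 2 :=
      Finset.sum_le_sum fun i _ => by
        rw [pderiv'_LL hν0 hν1]
        exact mul_le_of_le_one_left (sq_nonneg _) (tmean_le_one hν0 hν1 x i)
    linarith [hL x u]
end
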